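/- For every pre-principal collection 𝒬 of subcubes of 𝔹^n and every pre-ideal collection 𝒥 of subcubes of 𝔹^n: λ(𝒬) = Trapspaces(F(𝒬)) and μ(𝒥) = PT(F(𝒥)). Consequently, μ(λ(𝒬)) = 𝒬 and λ(μ(𝒥)) = 𝒥. -/

import Mathlib

/-!  Common definitions: Boolean networks on `Fin n → Bool`. -/

/-- The update `f^{(S)}` of the coordinates in `S` according to `f`. -/
def upd {n : ℕ} (f : (Fin n → Bool) → Fin n → Bool) (S : Finset (Fin n)) :
    (Fin n → Bool) → Fin n → Bool :=
  fun x i => if i ∈ S then f x i else x i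

/-- `f^{(S,T)} = f^{(T)} ∘ f^{(S)}`. -/
def upd2 {n : ℕ} (f : (Fin n → Bool) → Fin n → Bool) (S T : Finset (Fin n)) :
    (Fin n → Bool) → Fin n → Bool :=
  upd f T ∘ upd f S

/-- `Δ(x,y)`, the set of coordinates where `x` and `y` differ. -/
def delta {n : ℕ} (x y : Fin n → Bool) : Set (Fin n) := {i | x i ≠ y i}

/-- Hamming distance. -/
noncomputable def hdist {n : ℕ} (x y : Fin n → Bool) : ℕ := (delta x y).ncard

/-- The interval (subcube) `[x,y]`. -/
def interval {n : ℕ} (x y : Fin n → Bool) : Set (Fin n → Bool) :=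
  {z | delta x z ⊆ delta x y}

/-- A subcube of `𝔹^n`: fix the coordinates in `S` to `0` and those in `T` to `1`. -/
def IsSubcube {n : ℕ} (X : Set (Fin n → Bool)) : Prop :=
  ∃ S T : Set (Fin n), Disjoint S T ∧
    X = {x | (∀ i ∈ S, x i = false) ∧ (∀ i ∈ T, x i = true)}

/-- The partial order `f ⊑ g` on Boolean networks. -/
def BNle {n : ℕ} (f g : (Fin n → Bool) → Fin n → Bool) : Prop :=
  ∀ x, delta x (f x) ⊆ delta x (g x)

/-- A trapspace of `f`: an invariant subcube. -/
def IsTrapspace {n : ℕ} (f : (Fin n → Bool) → Fin n → Bool)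
    (X : Set (Fin n → Bool)) : Prop :=
  IsSubcube X ∧ ∀ x ∈ X, f x ∈ X

/-- The collection of all trapspaces of `f`. -/
def trapspaces {n : ℕ} (f : (Fin n → Bool) → Fin n → Bool) :
    Set (Set (Fin n → Bool)) :=
  {X | IsTrapspace f X}

/-- The principal trapspace `T_f(x)`: the smallest trapspace of `f` containing `x`. -/
def Tprin {n : ℕ} (f : (Fin n → Bool) → Fin n → Bool) (x : Fin n → Bool) :
    Set (Fin n → Bool) :=
  ⋂₀ {X | IsTrapspace f X ∧ x ∈ X}

/-- The collection of principal trapspaces of `f`. -/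
def PT {n : ℕ} (f : (Fin n → Bool) → Fin n → Bool) : Set (Set (Fin n → Bool)) :=
  {X | ∃ x, X = Tprin f x}

-- The opposite of `x` in a subcube `X` containing `x`: the coordinate `i` is flipped
-- iff some element of `X` differs from `x` there; so `[x, opp X x] = X` when `X` is a
-- subcube containing `x`.
open scoped Classical in
noncomputable def opp {n : ℕ} (X : Set (Fin n → Bool)) (x : Fin n → Bool) :
    Fin n → Bool :=
  fun i => if ∃ y ∈ X, y i ≠ x i then !(x i) else x i

/-- The trapping closure `f^T`, characterised by `[x, f^T(x)] = T_f(x)`. -/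
noncomputable def trapClosure {n : ℕ} (f : (Fin n → Bool) → Fin n → Bool) :
    (Fin n → Bool) → Fin n → Bool :=
  fun x => opp (Tprin f x) x

/-- The general asynchronous graph of `f`, as a relation on `𝔹^n`. -/
def GA {n : ℕ} (f : (Fin n → Bool) → Fin n → Bool) :
    (Fin n → Bool) → (Fin n → Bool) → Prop :=
  fun x y => ∃ S : Finset (Fin n), y = upd f S x

/-- The asynchronous graph of `f`, as a relation on `𝔹^n`. -/
def Agraph {n : ℕ} (f : (Fin n → Bool) → Fin n → Bool) :
    (Fin n → Bool) → (Fin n → Bool) → Prop :=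
  fun x y => ∃ i : Fin n, y = upd f {i} x

/-- The trapping graph of `f`: an edge `(x,y)` iff `y ∈ T_f(x)`. -/
def TG {n : ℕ} (f : (Fin n → Bool) → Fin n → Bool) :
    (Fin n → Bool) → (Fin n → Bool) → Prop :=
  fun x y => y ∈ Tprin f x

/-- A network is trapping if its general asynchronous graph is transitive. -/
def IsTrapping {n : ℕ} (f : (Fin n → Bool) → Fin n → Bool) : Prop :=
  Transitive (GA f)

/-- A commutative Boolean network: `f^{(i,j)} = f^{(j,i)}` for all `i,j`. -/
def IsCommutative' {n : ℕ} (f : (Fin n → Bool) → Fin n → Bool) : Prop :=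
  ∀ i j : Fin n, upd2 f {i} {j} = upd2 f {j} {i}

/-- `𝒜(x)`: the intersection of all members of `𝒜` containing `x`
(`= 𝔹^n` if no member contains `x`, since `⋂₀ ∅ = univ`). -/
def collAt {n : ℕ} (𝒜 : Set (Set (Fin n → Bool))) (x : Fin n → Bool) :
    Set (Fin n → Bool) :=
  ⋂₀ {A ∈ 𝒜 | x ∈ A}

/-- The network `F(𝒜)`, characterised by `[x, F(𝒜)(x)] = 𝒜(x)`. -/
noncomputable def Fnet {n : ℕ} (𝒜 : Set (Set (Fin n → Bool))) :
    (Fin n → Bool) → Fin n → Bool :=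
  fun x => opp (collAt 𝒜 x) x

/-- A collection of subcubes is pre-principal if `𝒬 = {𝒬(x) : x ∈ 𝔹^n}`. -/
def PrePrincipal {n : ℕ} (𝒬 : Set (Set (Fin n → Bool))) : Prop :=
  𝒬 = {X | ∃ x, X = collAt 𝒬 x}

/-- `λ(𝒜)`: unions of subcollections of `𝒜` that are subcubes. -/
def lamColl {n : ℕ} (𝒜 : Set (Set (Fin n → Bool))) : Set (Set (Fin n → Bool)) :=
  {X | ∃ ℛ ⊆ 𝒜, X = ⋃₀ ℛ ∧ IsSubcube X}

/-- `μ(𝒜) = {𝒜(x) : x ∈ 𝔹^n}`. -/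
def muColl {n : ℕ} (𝒜 : Set (Set (Fin n → Bool))) : Set (Set (Fin n → Bool)) :=
  {X | ∃ x, X = collAt 𝒜 x}

/-- A pre-ideal collection of subcubes. -/
def PreIdeal {n : ℕ} (𝒥 : Set (Set (Fin n → Bool))) : Prop :=
  Set.univ ∈ 𝒥 ∧
  (∀ A ∈ 𝒥, ∀ B ∈ 𝒥, (A ∩ B).Nonempty → A ∩ B ∈ 𝒥) ∧
  (∀ ℛ ⊆ 𝒥, IsSubcube (⋃₀ ℛ) → ⋃₀ ℛ ∈ 𝒥)

/-- The collection of minimal trapspaces of `f`. -/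
def MT {n : ℕ} (f : (Fin n → Bool) → Fin n → Bool) : Set (Set (Fin n → Bool)) :=
  {X | IsTrapspace f X ∧ ∀ Y, IsTrapspace f Y → ¬ Y ⊂ X}

/-- `M(f)`: the union of the minimal trapspaces of `f`. -/
def Mset {n : ℕ} (f : (Fin n → Bool) → Fin n → Bool) : Set (Fin n → Bool) :=
  ⋃₀ MT f

-- The min-trapping extension `f^M`: `[x, f^M(x)] = T_f(x)` if `x ∈ M(f)`,
-- and `f^M(x) = ¬x` otherwise.
open scoped Classical in
noncomputable def minExt {n : ℕ} (f : (Fin n → Bool) → Fin n → Bool) :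
    (Fin n → Bool) → Fin n → Bool :=
  fun x => if x ∈ Mset f then opp (Tprin f x) x else fun i => !(x i)

/-!
`F(𝒜)` sends `x` to the corner of the subcube `𝒜(x)` opposite to `x`, so a subcube is a
trapspace of `F(𝒜)` exactly when it contains `𝒜(y)` for each of its points `y`; in particular
`T_{F(𝒜)}(x) = 𝒜(x)`. Such a subcube is the union of the `𝒜(y)` it contains, which gives
`λ(𝒬) = Trapspaces(F(𝒬))` as soon as every `𝒬(y)` belongs to `𝒬`. Passing from a collection of
subcubes `𝒜` to `λ(𝒜)` or to `μ(𝒜)` does not change the map `x ↦ 𝒜(x)`, and a pre-ideal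
contains every `𝒥(x)`, being closed under finite nonempty intersections; the two inversion
identities follow.
-/

open Set

variable {n : ℕ}

section Subcube

variable {X : Set (Fin n → Bool)} {x y z : Fin n → Bool}

theorem isSubcube_iff_of_mem (hx : x ∈ X) :
    IsSubcube X ↔ ∃ I : Set (Fin n), X = {z | ∀ i ∈ I, z i = x i} := by
  constructor
  · rintro ⟨S, T, -, rfl⟩
    refine ⟨S ∪ T, Set.ext fun z => ⟨?_, fun h => ?_⟩⟩
    · rintro ⟨h0, h1⟩ i (hi | hi)
      exacts [(h0 i hi).trans (hx.1 i hi).symm, (h1 i hi).trans (hx.2 i hi).symm]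
    · exact ⟨fun i hi => (h i (.inl hi)).trans (hx.1 i hi),
        fun i hi => (h i (.inr hi)).trans (hx.2 i hi)⟩
  · rintro ⟨I, rfl⟩
    refine ⟨{i | i ∈ I ∧ x i = false}, {i | i ∈ I ∧ x i = true}, ?_, ?_⟩
    · exact Set.disjoint_left.2 fun i h0 h1 => Bool.false_ne_true (h0.2.symm.trans h1.2)
    · ext z
      refine ⟨fun h => ⟨fun i hi => (h i hi.1).trans hi.2, fun i hi => (h i hi.1).trans hi.2⟩, ?_⟩
      rintro ⟨h0, h1⟩ i hi
      cases hxi : x i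
      exacts [h0 i ⟨hi, hxi⟩, h1 i ⟨hi, hxi⟩]

theorem IsSubcube.mem_iff (hX : IsSubcube X) (hx : x ∈ X) :
    z ∈ X ↔ ∀ i, (∀ y ∈ X, y i = x i) → z i = x i := by
  obtain ⟨I, hI⟩ := (isSubcube_iff_of_mem hx).1 hX
  refine ⟨fun hz i hi => hi z hz, fun hz => ?_⟩
  rw [hI]
  exact fun i hi => hz i fun y hy => by rw [hI] at hy; exact hy i hi

theorem isSubcube_sInter {F : Set (Set (Fin n → Bool))} (hF : ∀ A ∈ F, IsSubcube A)
    (hx : ∀ A ∈ F, x ∈ A) : IsSubcube (⋂₀ F) := by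
  refine (isSubcube_iff_of_mem (mem_sInter.2 hx)).2 ⟨{i | ∃ A ∈ F, ∀ y ∈ A, y i = x i}, ?_⟩
  ext z
  refine ⟨fun hz i ⟨A, hA, hi⟩ => hi z (hz A hA), fun hz A hA => ?_⟩
  exact ((hF A hA).mem_iff (hx A hA)).2 fun i hi => hz i ⟨A, hA, hi⟩

theorem delta_opp (X : Set (Fin n → Bool)) (x : Fin n → Bool) :
    delta x (opp X x) = {i | ∃ y ∈ X, y i ≠ x i} := by
  classical
  ext i
  simp only [delta, opp, mem_ofPred_eq]
  split_ifs with h <;> simp [h]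

theorem IsSubcube.interval_opp (hX : IsSubcube X) (hx : x ∈ X) : interval x (opp X x) = X := by
  ext z
  rw [hX.mem_iff hx, interval, mem_ofPred_eq, delta_opp]
  refine forall_congr' fun i => ⟨fun h hi => ?_, fun h hi => ?_⟩
  · by_contra hne
    obtain ⟨y, hy, hyi⟩ := h (Ne.symm hne)
    exact hyi (hi y hy)
  · exact by_contra fun hfix => hi (h fun y hy => by_contra fun hne => hfix ⟨y, hy, hne⟩).symm

theorem IsSubcube.interval_subset (hX : IsSubcube X) (hx : x ∈ X) (hy : y ∈ X) :
    interval x y ⊆ X := fun _ hz =>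
  (hX.mem_iff hx).2 fun _ hi => by_contra fun hne => hz (Ne.symm hne) (hi y hy).symm

end Subcube

section CollAt

variable {𝒜 : Set (Set (Fin n → Bool))} {A X : Set (Fin n → Bool)} {x y : Fin n → Bool}

theorem mem_collAt_self (𝒜 : Set (Set (Fin n → Bool))) (x : Fin n → Bool) : x ∈ collAt 𝒜 x :=
  fun _ hA => hA.2

theorem collAt_subset_of_mem (hA : A ∈ 𝒜) (hx : x ∈ A) : collAt 𝒜 x ⊆ A :=
  sInter_subset_of_mem ⟨hA, hx⟩

theorem collAt_subset_collAt (h : y ∈ collAt 𝒜 x) : collAt 𝒜 y ⊆ collAt 𝒜 x :=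
  fun _ hz A hA => hz A ⟨hA.1, h A hA⟩

theorem isSubcube_collAt (hsub : ∀ A ∈ 𝒜, IsSubcube A) (x : Fin n → Bool) :
    IsSubcube (collAt 𝒜 x) :=
  isSubcube_sInter (fun A hA => hsub A hA.1) fun _ hA => hA.2

theorem interval_Fnet (hsub : ∀ A ∈ 𝒜, IsSubcube A) (x : Fin n → Bool) :
    interval x (Fnet 𝒜 x) = collAt 𝒜 x :=
  (isSubcube_collAt hsub x).interval_opp (mem_collAt_self 𝒜 x)

theorem Fnet_mem_collAt (hsub : ∀ A ∈ 𝒜, IsSubcube A) (x : Fin n → Bool) :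
    Fnet 𝒜 x ∈ collAt 𝒜 x := by
  rw [← interval_Fnet hsub x]
  exact fun _ hi => hi

theorem isTrapspace_Fnet_iff (hsub : ∀ A ∈ 𝒜, IsSubcube A) :
    IsTrapspace (Fnet 𝒜) X ↔ IsSubcube X ∧ ∀ x ∈ X, collAt 𝒜 x ⊆ X := by
  refine and_congr_right fun hX => forall₂_congr fun x hx => ⟨fun hFx => ?_, fun h => ?_⟩
  · rw [← interval_Fnet hsub x]
    exact hX.interval_subset hx hFx
  · exact h (Fnet_mem_collAt hsub x)

theorem Tprin_Fnet (hsub : ∀ A ∈ 𝒜, IsSubcube A) : Tprin (Fnet 𝒜) = collAt 𝒜 := by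
  funext x
  refine Subset.antisymm (sInter_subset_of_mem ⟨?_, mem_collAt_self 𝒜 x⟩) ?_
  · exact (isTrapspace_Fnet_iff hsub).2
      ⟨isSubcube_collAt hsub x, fun _ hy => collAt_subset_collAt hy⟩
  · exact subset_sInter fun X ⟨hX, hx⟩ => ((isTrapspace_Fnet_iff hsub).1 hX).2 x hx

theorem muColl_eq_PT_Fnet (hsub : ∀ A ∈ 𝒜, IsSubcube A) : muColl 𝒜 = PT (Fnet 𝒜) := by
  rw [PT, Tprin_Fnet hsub]
  rfl

theorem mem_lamColl_iff (h : muColl 𝒜 ⊆ 𝒜) :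
    X ∈ lamColl 𝒜 ↔ IsSubcube X ∧ ∀ x ∈ X, collAt 𝒜 x ⊆ X := by
  constructor
  · rintro ⟨ℛ, hℛ, rfl, hX⟩
    refine ⟨hX, fun x hx => ?_⟩
    obtain ⟨A, hA, hxA⟩ := mem_sUnion.1 hx
    exact (collAt_subset_of_mem (hℛ hA) hxA).trans (subset_sUnion_of_mem hA)
  · rintro ⟨hX, hcl⟩
    have hunion : ⋃ x ∈ X, collAt 𝒜 x = X :=
      Subset.antisymm (iUnion₂_subset hcl) fun x hx => mem_biUnion hx (mem_collAt_self 𝒜 x)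
    refine ⟨collAt 𝒜 '' X, ?_, by rw [sUnion_image, hunion], hX⟩
    rintro _ ⟨x, -, rfl⟩
    exact h ⟨x, rfl⟩

theorem lamColl_eq_trapspaces_Fnet (hsub : ∀ A ∈ 𝒜, IsSubcube A) (h : PrePrincipal 𝒜) :
    lamColl 𝒜 = trapspaces (Fnet 𝒜) := by
  ext X
  exact (mem_lamColl_iff h.ge).trans (isTrapspace_Fnet_iff hsub).symm

theorem collAt_lamColl (hsub : ∀ A ∈ 𝒜, IsSubcube A) : collAt (lamColl 𝒜) = collAt 𝒜 := by
  funext x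
  refine Subset.antisymm (subset_sInter fun A ⟨hA, hx⟩ => ?_) (subset_sInter ?_)
  · exact collAt_subset_of_mem ⟨{A}, singleton_subset_iff.2 hA, (sUnion_singleton A).symm,
      hsub A hA⟩ hx
  · rintro _ ⟨⟨ℛ, hℛ, rfl, -⟩, hx⟩
    obtain ⟨A, hA, hxA⟩ := mem_sUnion.1 hx
    exact (collAt_subset_of_mem (hℛ hA) hxA).trans (subset_sUnion_of_mem hA)

theorem collAt_muColl (𝒜 : Set (Set (Fin n → Bool))) : collAt (muColl 𝒜) = collAt 𝒜 := by
  funext x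
  refine Subset.antisymm (collAt_subset_of_mem ⟨x, rfl⟩ (mem_collAt_self 𝒜 x)) ?_
  exact subset_sInter fun _ ⟨⟨y, hy⟩, hx⟩ => hy ▸ collAt_subset_collAt (hy ▸ hx)

theorem muColl_lamColl (hsub : ∀ A ∈ 𝒜, IsSubcube A) : muColl (lamColl 𝒜) = muColl 𝒜 := by
  rw [muColl, collAt_lamColl hsub]
  rfl

theorem muColl_muColl (𝒜 : Set (Set (Fin n → Bool))) : muColl (muColl 𝒜) = muColl 𝒜 := by
  rw [muColl, collAt_muColl]
  rfl

end CollAt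

section PreIdeal

variable {𝒥 : Set (Set (Fin n → Bool))}

theorem PreIdeal.sInter_mem (h𝒥 : PreIdeal 𝒥) {G : Set (Set (Fin n → Bool))} (hG : G.Finite)
    (hG𝒥 : G ⊆ 𝒥) (hne : (⋂₀ G).Nonempty) : ⋂₀ G ∈ 𝒥 := by
  induction G, hG using Set.Finite.induction_on with
  | empty => simpa using h𝒥.1
  | @insert A G _ _ ih =>
    rw [insert_subset_iff] at hG𝒥
    rw [sInter_insert] at hne ⊢
    exact h𝒥.2.1 A hG𝒥.1 _ (ih hG𝒥.2 (hne.mono inter_subset_right)) hne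

theorem PreIdeal.muColl_subset (h𝒥 : PreIdeal 𝒥) : muColl 𝒥 ⊆ 𝒥 := by
  rintro _ ⟨x, rfl⟩
  exact h𝒥.sInter_mem (toFinite _) (fun _ hA => hA.1) ⟨x, mem_collAt_self 𝒥 x⟩

theorem lamColl_muColl (hsub : ∀ A ∈ 𝒥, IsSubcube A) (h𝒥 : PreIdeal 𝒥) :
    lamColl (muColl 𝒥) = 𝒥 := by
  refine Subset.antisymm ?_ fun A hA => ?_
  · rintro _ ⟨ℛ, hℛ, rfl, hX⟩
    exact h𝒥.2.2 ℛ (hℛ.trans h𝒥.muColl_subset) hX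
  · refine (mem_lamColl_iff (muColl_muColl 𝒥).le).2 ⟨hsub A hA, fun x hx => ?_⟩
    rw [collAt_muColl]
    exact collAt_subset_of_mem hA hx

end PreIdeal

/-- `λ(𝒬) = Trapspaces(F(𝒬))`, `μ(𝒥) = PT(F(𝒥))`, and `λ`, `μ`
are mutually inverse between pre-principal and pre-ideal collections. -/
theorem stmt7 (n : ℕ) (𝒬 𝒥 : Set (Set (Fin n → Bool)))
    (h𝒬sub : ∀ A ∈ 𝒬, IsSubcube A) (h𝒬 : PrePrincipal 𝒬)
    (h𝒥sub : ∀ A ∈ 𝒥, IsSubcube A) (h𝒥 : PreIdeal 𝒥) :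
    lamColl 𝒬 = trapspaces (Fnet 𝒬) ∧
    muColl 𝒥 = PT (Fnet 𝒥) ∧
    muColl (lamColl 𝒬) = 𝒬 ∧
    lamColl (muColl 𝒥) = 𝒥 :=
  ⟨lamColl_eq_trapspaces_Fnet h𝒬sub h𝒬, muColl_eq_PT_Fnet h𝒥sub,
    (muColl_lamColl h𝒬sub).trans h𝒬.symm, lamColl_muColl h𝒥sub h𝒥⟩
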